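/- Let p be an odd prime and λ = (λ₁, 1) with 0 ≤ λ₁ ≤ p−1. Then every element of the JK-group G_λ^(p) that does not lie in the center Z(G_λ^(p)) has order exactly p². -/

import Mathlib

def gcomm {G : Type*} [Group G] (x y : G) : G := x⁻¹ * y⁻¹ * x * y

def jkRels (p : ℕ) (lam : ℕ × ℕ) : Set (FreeGroup (Fin 4)) :=
  {r | ∃ i j k : Fin 4,
      r = gcomm (gcomm (FreeGroup.of i) (FreeGroup.of j)) (FreeGroup.of k)} ∪
  {FreeGroup.of 0 ^ p * (gcomm (FreeGroup.of 0) (FreeGroup.of 2))⁻¹,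
   FreeGroup.of 1 ^ p *
     (gcomm (FreeGroup.of 0) (FreeGroup.of 2 ^ lam.1 * FreeGroup.of 3 ^ lam.2))⁻¹,
   FreeGroup.of 2 ^ p * (gcomm (FreeGroup.of 1) (FreeGroup.of 2 * FreeGroup.of 3))⁻¹,
   FreeGroup.of 3 ^ p * (gcomm (FreeGroup.of 1) (FreeGroup.of 3))⁻¹,
   gcomm (FreeGroup.of 0) (FreeGroup.of 1),
   gcomm (FreeGroup.of 2) (FreeGroup.of 3)}

abbrev JKGroup (p : ℕ) (lam : ℕ × ℕ) : Type := PresentedGroup (jkRels p lam)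

def jka₁ (p : ℕ) (lam : ℕ × ℕ) : JKGroup p lam := PresentedGroup.of 0
def jka₂ (p : ℕ) (lam : ℕ × ℕ) : JKGroup p lam := PresentedGroup.of 1
def jkb₁ (p : ℕ) (lam : ℕ × ℕ) : JKGroup p lam := PresentedGroup.of 2
def jkb₂ (p : ℕ) (lam : ℕ × ℕ) : JKGroup p lam := PresentedGroup.of 3

/-!
The relators `[[x, y], z]` make the commutators of generators central, so `G = G_λ` has class two, and
the relations `x^p = [·,·]` for the four generators `x` put their `p`-th powers into `G'`.
Hence `G/G'` has exponent `p`; and `[x, y]^p = 1` because conjugation by `x` sends `y ↦ [x, y] y`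
and fixes the central element `y^p`. So `g^(p²) = 1` for all `g`.

For the lower bound, `G` maps to `(ℤ/p²)⁴` with the product `u v = u + v + p β(u, v)` for a
suitable bilinear `β`, where for odd `p` the `p`-th power is `u ↦ p u`. Composing with
`u ↦ p u` gives a homomorphism `G^ab → (ℤ/p²)⁴` sending the generators to `p eᵢ`; as `G^ab`
has exponent `p` it is injective. So `g^p = 1` forces `g ∈ G' ≤ Z(G)`.
-/

section Commutators

open Subgroup
open scoped commutatorElement

variable {G : Type*} [Group G]

@[simp]
lemma map_gcomm {H : Type*} [Group H] (f : G →* H) (x y : G) :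
    f (gcomm x y) = gcomm (f x) (f y) := by
  simp [gcomm]

lemma gcomm_eq_one_iff_commute {x y : G} : gcomm x y = 1 ↔ Commute x y := by
  rw [show gcomm x y = (y * x)⁻¹ * (x * y) by simp [gcomm, mul_assoc], inv_mul_eq_one, eq_comm]
  rfl

lemma gcomm_mem_commutator (x y : G) : gcomm x y ∈ commutator G := by
  rw [show gcomm x y = ⁅x⁻¹, y⁻¹⁆ by simp [gcomm, commutatorElement_def]]
  exact commutator_mem_commutator (mem_top _) (mem_top _)

lemma commutator_le_center_of_gcomm_mem_center {S : Set G} (hS : closure S = ⊤)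
    (h : ∀ s ∈ S, ∀ t ∈ S, gcomm s t ∈ center G) : commutator G ≤ center G := by
  let π := QuotientGroup.mk' (center G)
  have hπS : closure (π '' S) = ⊤ := by
    rw [← MonoidHom.map_closure, hS, map_top_of_surjective _ (QuotientGroup.mk'_surjective _)]
  have hcenter : (⊤ : Subgroup (G ⧸ center G)) ≤ center _ := by
    rw [← hπS, closure_le, center_eq_iInf hπS]
    rintro _ ⟨s, hs, rfl⟩
    simp only [SetLike.mem_coe, mem_iInf, mem_centralizer_singleton_iff]
    rintro _ ⟨t, ht, rfl⟩
    refine gcomm_eq_one_iff_commute.mp ?_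
    rw [← map_gcomm, ← MonoidHom.mem_ker, QuotientGroup.ker_mk']
    exact h s hs t ht
  rw [commutator_eq_closure, closure_le]
  rintro _ ⟨x, y, rfl⟩
  rw [SetLike.mem_coe, ← QuotientGroup.eq_one_iff, ← QuotientGroup.mk'_apply,
    map_commutatorElement, commutatorElement_eq_one_iff_commute]
  exact mem_center_iff.mp (hcenter (mem_top (π y))) (π x)

lemma commutatorElement_pow_eq_one {x y : G} {n : ℕ} (h₁ : Commute ⁅x, y⁆ y)
    (h₂ : Commute x (y ^ n)) : ⁅x, y⁆ ^ n = 1 := by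
  have hconj : x * y * x⁻¹ = ⁅x, y⁆ * y := by rw [commutatorElement_def]; group
  have h := conj_pow (a := x) (b := y) (i := n)
  rw [hconj, h₁.mul_pow, h₂.eq, mul_inv_cancel_right] at h
  exact mul_eq_right.mp h

lemma pow_eq_one_of_mem_commutator {n : ℕ} (hZ : commutator G ≤ center G)
    (hpow : ∀ y : G, y ^ n ∈ center G) {z : G} (hz : z ∈ commutator G) : z ^ n = 1 := by
  have hcomm : ∀ {a}, a ∈ closure (commutatorSet G) → ∀ b, Commute b a := fun ha ↦
    mem_center_iff.mp (hZ (commutator_eq_closure G ▸ ha))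
  rw [commutator_eq_closure] at hz
  induction hz using closure_induction with
  | mem _ h =>
    obtain ⟨x, y, rfl⟩ := h
    exact commutatorElement_pow_eq_one (hcomm (subset_closure ⟨x, y, rfl⟩) y).symm
      (mem_center_iff.mp (hpow y) x)
  | one => exact one_pow n
  | mul a b ha _ iha ihb => rw [(hcomm ha b).symm.mul_pow, iha, ihb, one_mul]
  | inv a _ iha => rw [inv_pow, iha, inv_one]

end Commutators

lemma PresentedGroup.mk_eq_one_of_mem {α : Type*} {rels : Set (FreeGroup α)} {r : FreeGroup α}
    (hr : r ∈ rels) : PresentedGroup.mk rels r = 1 :=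
  (QuotientGroup.eq_one_iff _).mpr (Subgroup.subset_normalClosure hr)

lemma injective_of_map_eq_ofAdd_single {A ι R : Type*} [CommGroup A] [Fintype ι] [DecidableEq ι]
    [AddCommGroup R] {f : ι → A} (hf : Subgroup.closure (Set.range f) = ⊤) {c : R}
    (hc : ∀ i, orderOf (f i) ∣ addOrderOf c) (φ : A →* Multiplicative (ι → R))
    (hφ : ∀ i, φ (f i) = .ofAdd (Pi.single i c)) : Function.Injective φ := by
  rw [injective_iff_map_eq_one]
  intro x hx
  obtain ⟨n, rfl⟩ := Subgroup.exists_of_mem_closure_range f x (hf ▸ Subgroup.mem_top x)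
  have hn : ∀ i, n i • c = 0 := fun i ↦ by
    simpa [hφ, Pi.single_apply] using congr_arg (fun v : Multiplicative (ι → R) ↦ v.toAdd i) hx
  exact Finset.prod_eq_one fun i _ ↦ orderOf_dvd_iff_zpow_eq_one.mp
    ((Int.natCast_dvd_natCast.mpr (hc i)).trans (addOrderOf_dvd_iff_zsmul_eq_zero.mpr (hn i)))

section PTwist

variable {p : ℕ} {M : Type*} [AddCommGroup M] [Module (ZMod (p ^ 2)) M]

/-- The product is `u * v = u + v + p • β u v`; it is associative because `p • p • m = 0`. -/
@[ext]
structure PTwist (β : M →ₗ[ZMod (p ^ 2)] M →ₗ[ZMod (p ^ 2)] M) where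
  val : M

namespace PTwist

variable {β : M →ₗ[ZMod (p ^ 2)] M →ₗ[ZMod (p ^ 2)] M}

lemma natCast_smul_natCast_smul (m : M) : (p : ZMod (p ^ 2)) • (p : ZMod (p ^ 2)) • m = 0 := by
  rw [smul_smul, ← Nat.cast_mul, ← sq, ZMod.natCast_self, zero_smul]

instance : One (PTwist β) := ⟨⟨0⟩⟩
instance : Mul (PTwist β) := ⟨fun u v ↦ ⟨u.val + v.val + (p : ZMod (p ^ 2)) • β u.val v.val⟩⟩
instance : Inv (PTwist β) := ⟨fun u ↦ ⟨-u.val + (p : ZMod (p ^ 2)) • β u.val u.val⟩⟩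

@[simp] lemma val_one : (1 : PTwist β).val = 0 := rfl
@[simp] lemma val_mul (u v : PTwist β) :
    (u * v).val = u.val + v.val + (p : ZMod (p ^ 2)) • β u.val v.val := rfl
@[simp] lemma val_inv (u : PTwist β) :
    u⁻¹.val = -u.val + (p : ZMod (p ^ 2)) • β u.val u.val := rfl

instance : Group (PTwist β) := Group.ofLeftAxioms
  (fun u v w ↦ by ext; simp [natCast_smul_natCast_smul]; abel)
  (fun u ↦ by ext; simp)
  (fun u ↦ by ext; simp [natCast_smul_natCast_smul])

lemma val_pow (u : PTwist β) (n : ℕ) :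
    (u ^ n).val = n • u.val + n.choose 2 • (p : ZMod (p ^ 2)) • β u.val u.val := by
  induction n with
  | zero => simp
  | succ n ih =>
    rw [pow_succ, val_mul, ih, Nat.choose_succ_succ', Nat.choose_one_right]
    simp [natCast_smul_natCast_smul, add_smul]
    module

lemma val_pow_of_odd (hp : Odd p) (u : PTwist β) :
    (u ^ p).val = (p : ZMod (p ^ 2)) • u.val := by
  obtain ⟨k, hk⟩ := hp
  have hchoose : p.choose 2 = k * p := by
    rw [Nat.choose_two_right, hk, Nat.add_sub_cancel, mul_comm, mul_assoc,
      Nat.mul_div_cancel_left _ two_pos]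
  simp [val_pow, hchoose, mul_smul, ← Nat.cast_smul_eq_nsmul (ZMod (p ^ 2)),
    natCast_smul_natCast_smul]

lemma val_gcomm (u v : PTwist β) :
    (gcomm u v).val = (p : ZMod (p ^ 2)) • (β u.val v.val - β v.val u.val) := by
  simp [gcomm, natCast_smul_natCast_smul, smul_sub]
  abel

lemma gcomm_gcomm_eq_one (u v w : PTwist β) : gcomm (gcomm u v) w = 1 := by
  ext; simp [val_gcomm, smul_sub, natCast_smul_natCast_smul]

def pSmulHom : PTwist β →* Multiplicative M where
  toFun u := .ofAdd ((p : ZMod (p ^ 2)) • u.val)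
  map_one' := by simp
  map_mul' u v := by simp [← ofAdd_add, natCast_smul_natCast_smul]

lemma pSmulHom_apply (u : PTwist β) : pSmulHom u = .ofAdd ((p : ZMod (p ^ 2)) • u.val) := rfl

end PTwist

end PTwist

namespace JKGroup

open Subgroup

section Exponent

variable {p : ℕ} {lam : ℕ × ℕ}

lemma gcomm_of_mem_center (i j : Fin 4) :
    gcomm (PresentedGroup.of i) (PresentedGroup.of j) ∈ center (JKGroup p lam) := by
  rw [center_eq_iInf (PresentedGroup.closure_range_of _)]
  simp only [mem_iInf, mem_centralizer_singleton_iff]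
  rintro _ ⟨k, rfl⟩
  have h := PresentedGroup.mk_eq_one_of_mem
    (show gcomm (gcomm (.of i) (.of j)) (.of k) ∈ jkRels p lam from Or.inl ⟨i, j, k, rfl⟩)
  rw [map_gcomm, map_gcomm] at h
  exact gcomm_eq_one_iff_commute.mp h

lemma commutator_le_center : commutator (JKGroup p lam) ≤ center (JKGroup p lam) :=
  commutator_le_center_of_gcomm_mem_center (PresentedGroup.closure_range_of _)
    (by rintro _ ⟨i, rfl⟩ _ ⟨j, rfl⟩; exact gcomm_of_mem_center i j)

lemma of_pow_mem_commutator (i : Fin 4) :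
    (PresentedGroup.of i : JKGroup p lam) ^ p ∈ commutator (JKGroup p lam) := by
  have key : ∀ x y : FreeGroup (Fin 4), FreeGroup.of i ^ p * (gcomm x y)⁻¹ ∈ jkRels p lam →
      (PresentedGroup.of i : JKGroup p lam) ^ p ∈ commutator (JKGroup p lam) := by
    intro x y hr
    have h := PresentedGroup.mk_eq_one_of_mem hr
    rw [map_mul, map_inv, map_pow, map_gcomm, mul_inv_eq_one] at h
    exact h ▸ gcomm_mem_commutator _ _
  fin_cases i
  · exact key (.of 0) (.of 2) (by simp [jkRels])
  · exact key (.of 0) (.of 2 ^ lam.1 * .of 3 ^ lam.2) (by simp [jkRels])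
  · exact key (.of 1) (.of 2 * .of 3) (by simp [jkRels])
  · exact key (.of 1) (.of 3) (by simp [jkRels])

lemma pow_mem_commutator (g : JKGroup p lam) : g ^ p ∈ commutator (JKGroup p lam) := by
  have h : (powMonoidHom p).comp Abelianization.of = (1 : JKGroup p lam →* _) :=
    PresentedGroup.ext fun i ↦ by
      rw [MonoidHom.comp_apply, powMonoidHom_apply, MonoidHom.one_apply, ← map_pow,
        ← MonoidHom.mem_ker, Abelianization.ker_of]
      exact of_pow_mem_commutator i
  rw [← Abelianization.ker_of, MonoidHom.mem_ker, map_pow]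
  exact DFunLike.congr_fun h g

lemma pow_p_sq_eq_one (g : JKGroup p lam) : g ^ (p ^ 2) = 1 := by
  rw [sq, pow_mul]
  exact pow_eq_one_of_mem_commutator commutator_le_center
    (fun y ↦ commutator_le_center (pow_mem_commutator y)) (pow_mem_commutator g)

end Exponent

section Model

variable (p l : ℕ)

/-- Coordinates are the exponents of `a₁, a₂, b₁, b₂` (basis `e₀, …, e₃`), whose `p`-th powers
are `p e₀, …, p e₃`. Since `gcomm u v = p • (β u v - β v u)`, this `β` is chosen so that
`[a₁, b₁] = p e₀`, `[a₁, b₁ˡ b₂] = p e₁`, `[a₂, b₁ b₂] = p e₂` and `[a₂, b₂] = p e₃`. -/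
def modelForm : (Fin 4 → ZMod (p ^ 2)) →ₗ[ZMod (p ^ 2)] (Fin 4 → ZMod (p ^ 2)) →ₗ[ZMod (p ^ 2)]
    (Fin 4 → ZMod (p ^ 2)) :=
  LinearMap.mk₂ _
    (fun u v ↦ ![(l * u 3 - u 2) * v 0, -(u 3 * v 0), -(u 2 * v 1), (u 2 - u 3) * v 1])
    (fun _ _ _ ↦ by ext i; fin_cases i <;> simp <;> ring)
    (fun _ _ _ ↦ by ext i; fin_cases i <;> simp <;> ring)
    (fun _ _ _ ↦ by ext i; fin_cases i <;> simp <;> ring)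
    (fun _ _ _ ↦ by ext i; fin_cases i <;> simp <;> ring)

def modelGen (i : Fin 4) : PTwist (modelForm p l) := ⟨Pi.single i 1⟩

lemma modelGen_pow (i : Fin 4) (n : ℕ) :
    (modelGen p l i ^ n).val = Pi.single i (n : ZMod (p ^ 2)) := by
  rw [PTwist.val_pow]
  ext j
  fin_cases i <;> fin_cases j <;> simp [modelGen, modelForm]

lemma modelGen_satisfies_rels : ∀ r ∈ jkRels p (l, 1), FreeGroup.lift (modelGen p l) r = 1 := by
  rintro r (⟨i, j, k, rfl⟩ | hr)
  · simp [PTwist.gcomm_gcomm_eq_one]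
  · rcases hr with rfl | rfl | rfl | rfl | rfl | rfl <;>
      simp only [map_mul, map_inv, map_pow, map_gcomm, FreeGroup.lift_apply_of, mul_inv_eq_one,
        PTwist.ext_iff, PTwist.val_gcomm, PTwist.val_mul, PTwist.val_one, modelGen_pow] <;>
      ext m <;> fin_cases m <;> simp [modelForm, modelGen, Matrix.vecHead, Matrix.vecTail]

def toModel : JKGroup p (l, 1) →* PTwist (modelForm p l) :=
  PresentedGroup.toGroup (modelGen_satisfies_rels p l)

/-- For odd `p` this sends the class of `g` to `(toModel g ^ p).val`. -/
def abToModel : Abelianization (JKGroup p (l, 1)) →* Multiplicative (Fin 4 → ZMod (p ^ 2)) :=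
  Abelianization.lift (PTwist.pSmulHom.comp (toModel p l))

variable {p l}

lemma abToModel_of_of (i : Fin 4) :
    abToModel p l (.of (.of i)) = .ofAdd (Pi.single i (p : ZMod (p ^ 2))) := by
  simp [abToModel, toModel, PTwist.pSmulHom_apply, modelGen, ← Pi.single_smul']

lemma abToModel_injective [NeZero p] : Function.Injective (abToModel p l) := by
  refine injective_of_map_eq_ofAdd_single ?_ (fun i ↦ ?_) _ abToModel_of_of
  · rw [Set.range_comp', ← MonoidHom.map_closure, PresentedGroup.closure_range_of,
      map_top_of_surjective _ QuotientGroup.mk_surjective]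
  · rw [ZMod.addOrderOf_coe _ (pow_ne_zero 2 (NeZero.ne p)),
      Nat.gcd_eq_right (dvd_pow_self p two_ne_zero), sq, Nat.mul_div_cancel _ (NeZero.pos p)]
    refine orderOf_dvd_of_pow_eq_one ?_
    rw [← map_pow, ← MonoidHom.mem_ker, Abelianization.ker_of]
    exact of_pow_mem_commutator i

lemma mem_commutator_of_pow_eq_one (hp : Odd p) {g : JKGroup p (l, 1)} (hg : g ^ p = 1) :
    g ∈ commutator (JKGroup p (l, 1)) := by
  have : NeZero p := ⟨hp.pos.ne'⟩
  rw [← Abelianization.ker_of, MonoidHom.mem_ker]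
  apply abToModel_injective
  rw [map_one, abToModel, Abelianization.lift_apply_of, MonoidHom.comp_apply,
    PTwist.pSmulHom_apply, ← PTwist.val_pow_of_odd hp, ← map_pow, hg, map_one]
  rfl

end Model

end JKGroup

theorem stmt_4_general (p : ℕ) (hp : p.Prime) (hodd : Odd p) (lam₁ : ℕ)
    (g : JKGroup p (lam₁, 1)) (hg : g ∉ Subgroup.center (JKGroup p (lam₁, 1))) :
    orderOf g = p ^ 2 := by
  have : Fact p.Prime := ⟨hp⟩
  refine orderOf_eq_prime_pow (n := 1) (fun hgp ↦ hg ?_) (JKGroup.pow_p_sq_eq_one g)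
  exact JKGroup.commutator_le_center (JKGroup.mem_commutator_of_pow_eq_one hodd (by rwa [pow_one] at hgp))

theorem stmt_4 (p : ℕ) (hp : p.Prime) (hodd : Odd p) (lam₁ : ℕ) (hlam₁ : lam₁ ≤ p - 1)
    (g : JKGroup p (lam₁, 1)) (hg : g ∉ Subgroup.center (JKGroup p (lam₁, 1))) :
    orderOf g = p ^ 2 :=
  stmt_4_general p hp hodd lam₁ g hg
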